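/- Let q > 1 be real, y be real, and m ≥ 1 an integer. Then for every i in the index set (m), one has p_m(χ_i(y,q) | y, q^{-(m-1)/2}, q) = 0; that is, the m points {χ_i(y,q) : i ∈ (m)} are roots of the Al-Salam-Chihara polynomial p_m(x | y, q^{-(m-1)/2}, q). -/
import Mathlib


/-- `[n]_q = 1 + q + ⋯ + q^{n-1}`. -/
def qInt (q : ℝ) (n : ℕ) : ℝ := ∑ i ∈ Finset.range n, q ^ i

/-- The Al-Salam-Chihara polynomials `p_n(x|y,ρ,q)`:
`p_0 = 1`, `p_1 = x - ρy`, and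
`p_{n+2} = (x - ρyq^{n+1})·p_{n+1} - (1 - ρ²q^n)·[n+1]_q·p_n`. -/
noncomputable def ascP (q ρ y x : ℝ) : ℕ → ℝ
  | 0 => 1
  | 1 => x - ρ * y
  | n + 2 => (x - ρ * y * q ^ (n + 1)) * ascP q ρ y x (n + 1)
      - (1 - ρ ^ 2 * q ^ n) * qInt q (n + 1) * ascP q ρ y x n

/-- `χ_n(y,q) = y(q^{n/2}+q^{-n/2})/2 + √(y²+4/(q-1))·(q^{n/2}-q^{-n/2})/2` for `n : ℤ`. -/
noncomputable def chi (q y : ℝ) (n : ℤ) : ℝ :=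
  y * (q ^ ((n : ℝ) / 2) + q ^ (-(n : ℝ) / 2)) / 2
    + Real.sqrt (y ^ 2 + 4 / (q - 1)) * (q ^ ((n : ℝ) / 2) - q ^ (-(n : ℝ) / 2)) / 2

/-- The index set `(m) = {2j - (m-1) : j = 0, 1, …, m-1} ⊆ ℤ`. -/
def indexSet (m : ℕ) : Finset ℤ :=
  Finset.image (fun j : ℕ => 2 * (j : ℤ) - ((m : ℤ) - 1)) (Finset.range m)

noncomputable def qb (q : ℝ) : ℕ → ℕ → ℝ
  | _, 0 => 1
  | 0, _+1 => 0
  | n+1, k+1 => qb q n (k+1) + q ^ (n-k) * qb q n k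

@[simp] lemma qb_zeroth (q : ℝ) : ∀ n, qb q n 0 = 1 := by
  intro n; cases n <;> rfl

lemma qb_eq_zero (q : ℝ) : ∀ n k, n < k → qb q n k = 0 := by
  intro n
  induction n with
  | zero =>
    intro k hk
    match k, hk with
    | k+1, _ => rfl
  | succ n ih =>
    intro k hk
    match k, hk with
    | k+1, hk =>
      show qb q n (k+1) + q ^ (n-k) * qb q n k = 0
      rw [ih _ (by omega), ih _ (by omega)]
      ring

lemma qb_diag (q : ℝ) : ∀ n, qb q n n = 1 := by
  intro n
  induction n with
  | zero => rfl
  | succ n ih =>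
    show qb q n (n+1) + q ^ (n-n) * qb q n n = 1
    rw [qb_eq_zero q n (n+1) (by omega), ih]
    simp

lemma qb_pascal (q : ℝ) (j k : ℕ) :
    qb q (j+k+1) (k+1) = qb q (j+k) (k+1) + q ^ j * qb q (j+k) k := by
  show qb q (j+k) (k+1) + q ^ ((j+k)-k) * qb q (j+k) k = _
  rw [Nat.add_sub_cancel]

lemma qb_J_aux (q : ℝ) : ∀ (n j k : ℕ), j + k = n →
    (q^(k+1) - 1) * qb q (j+k) (k+1) = (q^j - 1) * qb q (j+k) k := by
  intro n
  induction n with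
  | zero =>
    intro j k h
    obtain ⟨rfl, rfl⟩ : j = 0 ∧ k = 0 := by omega
    show (q^1 - 1) * qb q 0 1 = (q^0 - 1) * qb q 0 0
    rw [qb_eq_zero q 0 1 (by omega)]
    simp
  | succ n ih =>
    intro j k h
    match j, k with
    | 0, k =>
      rw [qb_eq_zero q (0+k) (k+1) (by omega)]
      simp
    | j+1, 0 =>
      have h1 := ih j 0 (by omega)
      rw [show j+1+0 = j+0+1 by omega, qb_pascal q j 0]
      rw [show j + 0 = j by omega] at *
      simp only [qb] at *
      linear_combination h1
    | j+1, k+1 =>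
      have h1 := ih j (k+1) (by omega)
      have h2 := ih (j+1) k (by omega)
      have p1 := qb_pascal q j (k+1)
      have p2 := qb_pascal q (j+1) k
      rw [show j+1+(k+1) = j+(k+1)+1 by omega, p1,
          show j+(k+1)+1 = (j+1)+k+1 by omega, p2]
      simp only [show j+(k+1) = j+1+k from by omega,
        show j+k+1 = j+1+k from by omega] at h1 ⊢
      linear_combination h1 + q^(j+1) * h2

lemma qb_J (q : ℝ) (j k : ℕ) :
    (q^(k+1) - 1) * qb q (j+k) (k+1) = (q^j - 1) * qb q (j+k) k :=
  qb_J_aux q (j+k) j k rfl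

lemma qb_I1 (q : ℝ) (hq : 1 < q) : ∀ (k j : ℕ),
    (q^(j+1) - 1) * qb q (j+k+1) k = (q^(j+k+1) - 1) * qb q (j+k) k := by
  intro k
  induction k with
  | zero => intro j; simp [qb_zeroth]
  | succ k ih =>
    intro j
    have hne : q^(k+1) - 1 ≠ 0 := by
      have : 1 < q^(k+1) := one_lt_pow₀ hq (by omega)
      linarith
    apply mul_left_cancel₀ hne
    have hJ2 := qb_J q (j+2) k
    have hIH := ih (j+1)
    have hJ1 := qb_J q (j+1) k
    simp only [show j+2+k = j+k+2 from by omega, show j+1+k = j+k+1 from by omega,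
      show j+1+1 = j+2 from by omega, show j+(k+1) = j+k+1 from by omega,
      show j+k+1+1 = j+k+2 from by omega,
      show j+(k+1)+1 = j+k+2 from by omega] at hJ2 hIH hJ1 ⊢
    linear_combination (q^(j+1)-1) * hJ2 + (q^(j+1)-1) * hIH - (q^(j+k+2)-1) * hJ1

lemma qb_I2 (q : ℝ) (hq : 1 < q) (j k : ℕ) :
    (q^(k+1) - 1) * qb q (j+k+1) (k+1) = (q^(j+k+1) - 1) * qb q (j+k) k := by
  have h1 := qb_J q (j+1) k
  have h2 := qb_I1 q hq k j
  rw [show j+1+k = j+k+1 by omega] at h1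
  linear_combination h1 + h2

noncomputable def tm (q u v α β : ℝ) (n k : ℕ) : ℝ :=
  qb q n k * α^(n-k) * β^k * (∏ j ∈ Finset.range (n-k), (1 - q^j*u))
    * (∏ j ∈ Finset.range k, (1 - q^j*v))

lemma qInt_mul (q : ℝ) (n : ℕ) : qInt q n * (q - 1) = q^n - 1 := by
  simpa [qInt] using geom_sum_mul q n

lemma tm_bracket (q u v α β : ℝ) (hq : 1 < q) (hαβ : α*β*(q-1) = -1) (j k : ℕ) :
    tm q u v α β (j+k+2) (k+1) =
      α*(1 - u*q^(j+k+1)) * tm q u v α β (j+k+1) (k+1)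
      + β*(1 - v*q^(j+k+1)) * tm q u v α β (j+k+1) k
      - (1 - u*v*q^(j+k)) * qInt q (j+k+1) * tm q u v α β (j+k) k := by
  have hE1 := qb_pascal q (j+1) k
  have hE2 := qb_I1 q hq k j
  have hE3 := qb_I2 q hq j k
  have hE4 := qInt_mul q (j+k+1)
  have hLeq : qInt q (j+k+1) = -(α*β)*(q^(j+k+1) - 1) := by
    linear_combination (-(α*β)) * hE4 + (qInt q (j+k+1)) * hαβ
  simp only [show j+1+k = j+k+1 from by omega, show j+1+k+1 = j+k+2 from by omega] at hE1
  simp only [tm, show j+k+2-(k+1) = j+1 from by omega, show j+k+1-(k+1) = j from by omega,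
    show j+k+1-k = j+1 from by omega, show j+k-k = j from by omega,
    Finset.prod_range_succ]
  rw [hLeq]
  set Pj := ∏ x ∈ Finset.range j, (1 - q ^ x * u) with hPj
  set Qk := ∏ x ∈ Finset.range k, (1 - q ^ x * v) with hQk
  linear_combination ((1-q^j*u)*(1-q^k*v)*α^(j+1)*β^(k+1)*Pj*Qk) * hE1
    + ((1-q^j*u)*α^(j+1)*β^(k+1)*Pj*Qk) * hE2
    + (u*q^j*(1-q^k*v)*α^(j+1)*β^(k+1)*Pj*Qk) * hE3

lemma tm_bd0 (q u v α β : ℝ) (n : ℕ) :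
    tm q u v α β (n+2) 0 = α*(1 - u*q^(n+1)) * tm q u v α β (n+1) 0 := by
  simp only [tm, Nat.sub_zero, qb_zeroth, Finset.prod_range_succ, Finset.range_zero,
    Finset.prod_empty, pow_zero]
  ring

lemma tm_bdtop (q u v α β : ℝ) (n : ℕ) :
    tm q u v α β (n+2) (n+2) = β*(1 - v*q^(n+1)) * tm q u v α β (n+1) (n+1) := by
  simp only [tm, Nat.sub_self, qb_diag, Finset.prod_range_succ, Finset.range_zero,
    Finset.prod_empty, pow_zero]
  ring

lemma ascP_sum (q u v α β ρ y x : ℝ) (hq : 1 < q) (hαβ : α*β*(q-1) = -1)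
    (hx : x = α + β) (hw : ρ*y = α*u + β*v) (hr : ρ^2 = u*v) :
    ∀ n, ascP q ρ y x n = ∑ k ∈ Finset.range (n+1), tm q u v α β n k := by
  intro n
  induction n using Nat.strong_induction_on with
  | _ n ih =>
  match n with
  | 0 =>
    show (1:ℝ) = _
    simp [tm]
  | 1 =>
    show x - ρ * y = _
    rw [Finset.sum_range_succ, Finset.sum_range_succ, Finset.sum_range_zero]
    have d1 : qb q 1 1 = 1 := qb_diag q 1
    simp only [tm, qb_zeroth, d1, Finset.range_zero, Finset.prod_empty,
      Finset.prod_range_succ, pow_zero, pow_one, Nat.sub_self, Nat.sub_zero]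
    rw [hx, hw]
    ring
  | Nat.succ (Nat.succ n) =>
    have ih1 := ih (n+1) (by omega)
    have ih0 := ih n (by omega)
    show (x - ρ * y * q ^ (n + 1)) * ascP q ρ y x (n + 1)
      - (1 - ρ ^ 2 * q ^ n) * qInt q (n + 1) * ascP q ρ y x n = _
    rw [ih1, ih0, hx, hw, hr]
    set T := tm q u v α β with hT
    have e1 : ∑ k ∈ Finset.range (n+2+1), T (n+2) k
        = (∑ k ∈ Finset.range (n+1), T (n+2) (k+1) + T (n+2) (n+2)) + T (n+2) 0 := by
      rw [Finset.sum_range_succ', Finset.sum_range_succ]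
    have e2 : ∑ k ∈ Finset.range (n+1+1), T (n+1) k
        = (∑ k ∈ Finset.range (n+1), T (n+1) (k+1)) + T (n+1) 0 :=
      Finset.sum_range_succ' _ _
    have e3 : ∑ k ∈ Finset.range (n+1+1), T (n+1) k
        = (∑ k ∈ Finset.range (n+1), T (n+1) k) + T (n+1) (n+1) :=
      Finset.sum_range_succ _ _
    have ebr : ∑ k ∈ Finset.range (n+1), T (n+2) (k+1)
        = ∑ k ∈ Finset.range (n+1),
            (α*(1 - u*q^(n+1)) * T (n+1) (k+1)
             + β*(1 - v*q^(n+1)) * T (n+1) k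
             - (1 - u*v*q^n) * qInt q (n+1) * T n k) := by
      apply Finset.sum_congr rfl
      intro k hk
      have hkn : k ≤ n := by simpa using Nat.lt_succ_iff.mp (Finset.mem_range.mp hk)
      obtain ⟨j, rfl⟩ : ∃ j, n = j + k := ⟨n - k, by omega⟩
      exact tm_bracket q u v α β hq hαβ j k
    have b0 : T (n+2) 0 = α*(1 - u*q^(n+1)) * T (n+1) 0 := tm_bd0 q u v α β n
    have btop : T (n+2) (n+2) = β*(1 - v*q^(n+1)) * T (n+1) (n+1) := tm_bdtop q u v α β n
    rw [e1, ebr, b0, btop]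
    rw [Finset.sum_sub_distrib, Finset.sum_add_distrib, ← Finset.mul_sum, ← Finset.mul_sum,
      ← Finset.mul_sum]
    have e2' : ∑ k ∈ Finset.range (n+1), T (n+1) (k+1)
        = (∑ k ∈ Finset.range (n+1+1), T (n+1) k) - T (n+1) 0 := by rw [e2]; ring
    have e3' : ∑ k ∈ Finset.range (n+1), T (n+1) k
        = (∑ k ∈ Finset.range (n+1+1), T (n+1) k) - T (n+1) (n+1) := by rw [e3]; ring
    rw [e2', e3']
    ring


theorem stmt10 (q : ℝ) (hq1 : 1 < q) (y : ℝ) (m : ℕ) (hm : 1 ≤ m) :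
    ∀ i ∈ indexSet m, ascP q (q ^ (-((m : ℝ) - 1) / 2)) y (chi q y i) m = 0 := by
  intro i hi
  simp only [indexSet, Finset.mem_image, Finset.mem_range] at hi
  obtain ⟨j, hj, rfl⟩ := hi
  have hq0 : (0:ℝ) < q := by linarith
  have hqm1 : q - 1 ≠ 0 := by linarith
  have hee : ((2 * (j:ℤ) - ((m:ℤ) - 1) : ℤ) : ℝ) = 2*(j:ℝ) - ((m:ℝ) - 1) := by
    push_cast; ring
  set E : ℝ := 2*(j:ℝ) - ((m:ℝ) - 1) with hE
  set s : ℝ := q ^ (E / 2) with hs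
  set si : ℝ := q ^ (-E / 2) with hsi
  set ρ : ℝ := q ^ (-((m : ℝ) - 1) / 2) with hρ
  set c : ℝ := Real.sqrt (y ^ 2 + 4 / (q - 1)) with hc
  have hssi : s * si = 1 := by
    rw [hs, hsi, ← Real.rpow_add hq0, show E/2 + -E/2 = 0 by ring, Real.rpow_zero]
  have hc2 : c^2 = y^2 + 4/(q-1) := by
    rw [hc]
    apply Real.sq_sqrt
    have : (0:ℝ) ≤ 4/(q-1) := div_nonneg (by norm_num) (by linarith)
    have := sq_nonneg y
    linarith
  set α : ℝ := (y + c)/2 * s with hα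
  set β : ℝ := (y - c)/2 * si with hβ
  set u : ℝ := ρ * si with hu
  set v : ℝ := ρ * s with hv
  have hαβ : α*β*(q-1) = -1 := by
    have h1 : α*β*(q-1) = (y^2 - c^2)/4*(q-1) * (s*si) := by rw [hα, hβ]; ring
    rw [hssi, mul_one, hc2] at h1
    rw [h1]
    field_simp
    ring
  have hchi : chi q y (2 * (j:ℤ) - ((m:ℤ) - 1)) = α + β := by
    rw [chi, hee, hα, hβ]
    ring
  have hw : ρ*y = α*u + β*v := by
    rw [hα, hβ, hu, hv]
    linear_combination (-(ρ*y)) * hssi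
  have hr : ρ^2 = u*v := by
    rw [hu, hv]
    linear_combination (-(ρ^2)) * hssi
  rw [ascP_sum q u v α β ρ y _ hq1 hαβ hchi hw hr m]
  apply Finset.sum_eq_zero
  intro k hk
  have hkm : k ≤ m := by simpa using Nat.lt_succ_iff.mp (Finset.mem_range.mp hk)
  have hu1 : q^(j:ℕ) * u = 1 := by
    rw [hu, hρ, hsi, ← Real.rpow_natCast q j, ← Real.rpow_add hq0, ← Real.rpow_add hq0]
    rw [show (j:ℝ) + (-((m:ℝ)-1)/2 + -E/2) = 0 by rw [hE]; ring, Real.rpow_zero]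
  have hv1 : q^(m-1-j : ℕ) * v = 1 := by
    have hcast : ((m - 1 - j : ℕ) : ℝ) = (m:ℝ) - 1 - (j:ℝ) := by
      have hj' : j ≤ m - 1 := by omega
      push_cast [Nat.cast_sub hj', Nat.cast_sub hm]
      ring
    rw [hv, hρ, hs, ← Real.rpow_natCast q (m-1-j), hcast, ← Real.rpow_add hq0,
      ← Real.rpow_add hq0]
    rw [show ((m:ℝ) - 1 - (j:ℝ)) + (-((m:ℝ)-1)/2 + E/2) = 0 by rw [hE]; ring, Real.rpow_zero]
  rcases Nat.lt_or_ge (k + j) m with hcase | hcase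
  · have hz : (∏ t ∈ Finset.range (m-k), (1 - q^t*u)) = 0 := by
      apply Finset.prod_eq_zero (Finset.mem_range.mpr (show j < m - k by omega))
      linear_combination (-1 : ℝ) * hu1
    simp only [tm, hz]
    ring
  · have hz : (∏ t ∈ Finset.range k, (1 - q^t*v)) = 0 := by
      apply Finset.prod_eq_zero (Finset.mem_range.mpr (show m-1-j < k by omega))
      linear_combination (-1 : ℝ) * hv1
    simp only [tm, hz]
    ring
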